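/- arXiv:1411.2348 — 3 statements merged into one kernel-verified Lean document; each statement's English description precedes it below -/
import Mathlib

section
/- For integers 1 ≤ k ≤ q-1, m ≥ 1, and 1 ≤ r ≤ n, the number T_{k,n}^(m)(r) of m-fold multisequences of length n over F_q whose nth joint nonlinear complexity of order k is at most r satisfies T_{k,n}^(m)(r) ≤ q^{(k+1)^r + m r}. -/
/-!
Every recursion of order `c ≤ r` can be padded to one of order `r` by ignoring the first `r - c`
variables. A multisequence satisfying a recursion of order `r` with `r ≤ n` is then determined by
its first `r` terms and by the recursion polynomial, which in turn is determined by its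
`(k + 1) ^ r` coefficients of exponent at most `k` in each variable. This injects the
multisequences of complexity at most `r` into `(F_q ^ ((k + 1) ^ r)) × (F_q ^ m) ^ r`.
-/

/-- A finite `m`-fold multisequence `Z` of length `n` over `F_q` satisfies a vector
recursion of order `c` by a polynomial of degree at most `k` in each variable,
applied componentwise. -/
def SatisfiesNLRecursionFin {Fq : Type*} [Field Fq] {m n : ℕ}
    (Z : Fin n → Fin m → Fq) (k c : ℕ) : Prop :=
  ∃ f : MvPolynomial (Fin c) Fq,
    (∀ s : Fin c, MvPolynomial.degreeOf s f ≤ k) ∧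
    ∀ j : Fin m, ∀ i : ℕ, ∀ h : i + c < n,
      Z ⟨i + c, h⟩ j =
        MvPolynomial.eval
          (fun s : Fin c => Z ⟨i + s, (Nat.add_lt_add_left s.2 i).trans h⟩ j) f

open MvPolynomial

namespace MvPolynomial

variable {σ τ R : Type*} [CommSemiring R]

theorem degreeOf_rename_le_of_injective {p : MvPolynomial σ R} {f : σ → τ}
    (hf : Function.Injective f) {k : ℕ} (hp : ∀ i, degreeOf i p ≤ k) (j : τ) :
    degreeOf j (rename f p) ≤ k := by
  by_cases hj : j ∈ Set.range f
  · obtain ⟨i, rfl⟩ := hj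
    rw [degreeOf_rename_of_injective hf]
    exact hp i
  · classical
    rw [degreeOf_def, degrees_rename_of_injective hf, Multiset.count_eq_zero.mpr]
    · exact Nat.zero_le k
    · simpa [Multiset.mem_map] using fun i _ h => hj ⟨i, h⟩

noncomputable def boundedCoeffs [Finite σ] (k : ℕ) (p : MvPolynomial σ R) :
    (σ → Fin (k + 1)) → R :=
  fun e => coeff (Finsupp.equivFunOnFinite.symm fun i => (e i : ℕ)) p

theorem boundedCoeffs_injOn [Finite σ] (k : ℕ) :
    Set.InjOn (boundedCoeffs (R := R) k) {p : MvPolynomial σ R | ∀ i, degreeOf i p ≤ k} := by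
  intro p hp q hq hpq
  ext d
  by_cases hd : ∀ i, d i ≤ k
  · have := congrFun hpq fun i => ⟨d i, Nat.lt_succ_of_le (hd i)⟩
    simpa [boundedCoeffs] using this
  · obtain ⟨i, hi⟩ := not_forall.mp hd
    have hlt : ∀ p : MvPolynomial σ R, degreeOf i p ≤ k → coeff d p = 0 := fun p hp =>
      notMem_support_iff.mp (notMem_support_of_degreeOf_lt i (by omega))
    rw [hlt p (hp i), hlt q (hq i)]

end MvPolynomial

section Recursion

variable {R : Type*} [CommSemiring R] {m n c : ℕ}

def SatisfiesRecursion (Z : Fin n → Fin m → R) (f : MvPolynomial (Fin c) R) : Prop :=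
  ∀ j : Fin m, ∀ i : ℕ, ∀ h : i + c < n,
    Z ⟨i + c, h⟩ j = eval (fun s : Fin c => Z ⟨i + s, (Nat.add_lt_add_left s.2 i).trans h⟩ j) f

theorem SatisfiesRecursion.eq_of_forall_lt {Z Z' : Fin n → Fin m → R} {f : MvPolynomial (Fin c) R}
    (hZ : SatisfiesRecursion Z f) (hZ' : SatisfiesRecursion Z' f)
    (hinit : ∀ i : Fin n, (i : ℕ) < c → Z i = Z' i) : Z = Z' := by
  funext ⟨i, hi⟩
  induction i using Nat.strong_induction_on with
  | _ i ih =>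
    by_cases hic : i < c
    · exact hinit ⟨i, hi⟩ hic
    · have hi' : i - c + c < n := by omega
      have hidx : (⟨i, hi⟩ : Fin n) = ⟨i - c + c, hi'⟩ := Fin.ext (by simp; omega)
      funext j
      rw [hidx, hZ j _ hi', hZ' j _ hi']
      exact congrArg (eval · f) (funext fun s => by rw [ih _ (by omega)])

theorem SatisfiesRecursion.rename_of_le {Z : Fin n → Fin m → R} {f : MvPolynomial (Fin c) R}
    (hZ : SatisfiesRecursion Z f) {r : ℕ} (hcr : c ≤ r) :
    SatisfiesRecursion Z (rename (fun s : Fin c => (⟨r - c + s, by omega⟩ : Fin r)) f) := by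
  intro j i hi
  have hi' : i + (r - c) + c < n := by omega
  have hidx : (⟨i + r, hi⟩ : Fin n) = ⟨i + (r - c) + c, hi'⟩ := Fin.ext (by simp; omega)
  rw [eval_rename, hidx, hZ j _ hi']
  exact congrArg (eval · f) (funext fun s => congrArg (Z · j) (Fin.ext (by simp; omega)))

end Recursion

theorem SatisfiesNLRecursionFin.mono {Fq : Type*} [Field Fq] {m n : ℕ}
    {Z : Fin n → Fin m → Fq} {k c r : ℕ} (hZ : SatisfiesNLRecursionFin Z k c) (hcr : c ≤ r) :
    SatisfiesNLRecursionFin Z k r := by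
  obtain ⟨f, hdeg, hrec⟩ := hZ
  have hinj : Function.Injective fun s : Fin c => (⟨r - c + s, by omega⟩ : Fin r) :=
    fun a b h => Fin.ext (by simpa using congrArg Fin.val h)
  exact ⟨_, degreeOf_rename_le_of_injective hinj hdeg,
    SatisfiesRecursion.rename_of_le (f := f) hrec hcr⟩

theorem count_multisequences_of_low_complexity_general
    {Fq : Type*} [Field Fq] [Fintype Fq] (k m n r : ℕ)
    (hrn : r ≤ n) :
    Set.ncard {Z : Fin n → Fin m → Fq | ∃ c ≤ r, SatisfiesNLRecursionFin Z k c}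
      ≤ Fintype.card Fq ^ ((k + 1) ^ r + m * r) := by
  classical
  have hpad : ∀ Z ∈ {Z : Fin n → Fin m → Fq | ∃ c ≤ r, SatisfiesNLRecursionFin Z k c},
      ∃ f : MvPolynomial (Fin r) Fq, (∀ s, degreeOf s f ≤ k) ∧ SatisfiesRecursion Z f :=
    fun Z ⟨_, hcr, hZ⟩ => hZ.mono hcr
  choose! poly hdeg hrec using hpad
  let code (Z : Fin n → Fin m → Fq) : ((Fin r → Fin (k + 1)) → Fq) × (Fin r → Fin m → Fq) :=
    (boundedCoeffs k (poly Z), fun s => Z (Fin.castLE hrn s))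
  have hcode : Set.InjOn code {Z | ∃ c ≤ r, SatisfiesNLRecursionFin Z k c} := by
    intro Z hZ Z' hZ' h
    have hpoly := boundedCoeffs_injOn k (hdeg Z hZ) (hdeg Z' hZ') (Prod.ext_iff.mp h).1
    exact (hrec Z hZ).eq_of_forall_lt (hpoly ▸ hrec Z' hZ')
      fun i hi => congrFun (Prod.ext_iff.mp h).2 ⟨i, hi⟩
  calc _ ≤ (Set.univ : Set (((Fin r → Fin (k + 1)) → Fq) × (Fin r → Fin m → Fq))).ncard :=
        Set.ncard_le_ncard_of_injOn code (fun _ _ => trivial) hcode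
    _ = Fintype.card Fq ^ ((k + 1) ^ r + m * r) := by
        simp [Set.ncard_univ, pow_add, pow_mul, mul_comm]

/-- the number `T_{k,n}^(m)(r)` of `m`-fold multisequences of length `n`
over `F_q` with `n`th joint nonlinear complexity of order `k` at most `r` is at most
`q^((k+1)^r + m·r)`. -/
theorem count_multisequences_of_low_complexity
    {Fq : Type*} [Field Fq] [Fintype Fq] (k m n r : ℕ)
    (hk1 : 1 ≤ k) (hk : k ≤ Fintype.card Fq - 1) (hm : 1 ≤ m)
    (hr1 : 1 ≤ r) (hrn : r ≤ n) :
    Set.ncard {Z : Fin n → Fin m → Fq | ∃ c ≤ r, SatisfiesNLRecursionFin Z k c}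
      ≤ Fintype.card Fq ^ ((k + 1) ^ r + m * r) :=
  count_multisequences_of_low_complexity_general k m n r hrn
end

section
/- Let 1 ≤ k ≤ q-1 and m ≥ 1, and equip the space (F_q^m)^∞ of m-fold multisequences over F_q with the product of uniform probability measures μ on F_q^m. For fixed ε > 0, the set A_n of multisequences Z with N_k^(m)(Z,n) ≤ log(mn)/log(k+1) - ε satisfies μ^∞(A_n) ≤ q^{(k+1)^{B_n} + m·B_n - m·n} for all sufficiently large n, where B_n = log(mn)/log(k+1) - ε. -/
/-! A multisequence of length `n` whose joint nonlinear complexity is at most `r ≤ n` is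
determined by a recursion polynomial in `r` variables of degree at most `k` in each variable,
which has at most `q ^ (k + 1) ^ r` choices, together with its first `r` terms, which have
`q ^ (m r)` choices; for `r > n` the trivial count `q ^ (m n)` is smaller. The cylinder measure
divides this count by `q ^ (m n)`, and rounding the threshold `B ≥ 0` down to `r = ⌊B⌋` gives
the bound. -/

/-- `Z` satisfies a recursion of order `c` by a polynomial of degree at most `k`
in each variable, over the first `n` terms of each component sequence. -/
def SatisfiesNLRecursion {Fq : Type*} [Field Fq] {m : ℕ}
    (Z : Fin m → ℕ → Fq) (k n c : ℕ) : Prop :=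
  ∃ f : MvPolynomial (Fin c) Fq,
    (∀ s : Fin c, MvPolynomial.degreeOf s f ≤ k) ∧
    ∀ j : Fin m, ∀ i : ℕ, i + c < n →
      Z j (i + c) = MvPolynomial.eval (fun s : Fin c => Z j (i + s)) f

open scoped Classical in
/-- The `n`th joint nonlinear complexity of order `k` of the `m`-fold
multisequence `Z` over `F_q`. -/
noncomputable def jointNLC {Fq : Type*} [Field Fq] {m : ℕ}
    (Z : Fin m → ℕ → Fq) (k n : ℕ) : ℕ :=
  if ∀ j : Fin m, ∀ i : ℕ, i < n → Z j i = 0 then 0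
  else sInf {c : ℕ | SatisfiesNLRecursion Z k n c}

variable {Fq : Type*} [Field Fq] [Fintype Fq] {m : ℕ}

instance fintypeTopMeasurable : MeasurableSpace (Fin m → Fq) := ⊤

instance : MeasurableSpace (ℕ → Fin m → Fq) := MeasurableSpace.pi

open MvPolynomial

namespace MvPolynomial

variable {R σ : Type*} [CommSemiring R]

noncomputable def boxCoeffs [Finite σ] (k : ℕ) (f : MvPolynomial σ R) :
    (σ → Fin (k + 1)) → R :=
  fun e => coeff (Finsupp.equivFunOnFinite.symm fun s => (e s : ℕ)) f

theorem coeff_eq_zero_of_degreeOf_lt {f : MvPolynomial σ R} {d : σ →₀ ℕ} {s : σ}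
    (h : degreeOf s f < d s) : coeff d f = 0 :=
  notMem_support_iff.mp fun hd => (monomial_le_degreeOf s hd).not_gt h

theorem injOn_boxCoeffs [Finite σ] (k : ℕ) :
    Set.InjOn (boxCoeffs (R := R) k) {f : MvPolynomial σ R | ∀ s, degreeOf s f ≤ k} := by
  intro f hf g hg hfg
  ext d
  by_cases hd : ∀ s, d s ≤ k
  · have := congrFun hfg fun s => ⟨d s, Nat.lt_succ_of_le (hd s)⟩
    simpa [boxCoeffs] using this
  · obtain ⟨s, hs⟩ := not_forall.mp hd
    rw [coeff_eq_zero_of_degreeOf_lt ((hf s).trans_lt (not_le.mp hs)),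
      coeff_eq_zero_of_degreeOf_lt ((hg s).trans_lt (not_le.mp hs))]

end MvPolynomial

theorem eq_of_recursion_of_eq_init {R : Type*} [CommSemiring R] {c n : ℕ}
    (f : MvPolynomial (Fin c) R) {z z' : ℕ → R}
    (hz : ∀ i, i + c < n → z (i + c) = eval (fun s : Fin c => z (i + s)) f)
    (hz' : ∀ i, i + c < n → z' (i + c) = eval (fun s : Fin c => z' (i + s)) f)
    (hinit : ∀ i < c, z i = z' i) : ∀ i < n, z i = z' i := by
  intro i
  induction i using Nat.strong_induction_on with
  | _ i ih =>
    intro hi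
    by_cases hic : i < c
    · exact hinit i hic
    · obtain ⟨l, rfl⟩ : ∃ l, i = l + c := ⟨i - c, by omega⟩
      rw [hz l hi, hz' l hi]
      congr 2
      funext s
      exact ih _ (by omega) (by omega)

section Recursion

variable {F : Type*} [Field F] {Z Z' : Fin m → ℕ → F} {k n c : ℕ}

theorem SatisfiesNLRecursion.congr (h : ∀ j, ∀ i < n, Z j i = Z' j i)
    (hZ : SatisfiesNLRecursion Z k n c) : SatisfiesNLRecursion Z' k n c := by
  obtain ⟨f, hdeg, hrec⟩ := hZ
  refine ⟨f, hdeg, fun j i hi => ?_⟩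
  rw [← h j (i + c) hi, hrec j i hi]
  congr 2
  funext s
  exact h j _ (by omega)

theorem satisfiesNLRecursion_of_le (hnc : n ≤ c) : SatisfiesNLRecursion Z k n c :=
  ⟨0, fun _ => by simp, fun _ _ hi => absurd hi (by omega)⟩

/-- A recursion of order `c` is one of order `c + 1` that ignores its first variable. -/
theorem SatisfiesNLRecursion.succ (h : SatisfiesNLRecursion Z k n c) :
    SatisfiesNLRecursion Z k n (c + 1) := by
  obtain ⟨f, hdeg, hrec⟩ := h
  refine ⟨rename Fin.succ f, fun s => ?_, fun j i hi => ?_⟩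
  · induction s using Fin.cases with
    | zero =>
      classical
      simp [degreeOf_def, degrees_rename_of_injective (Fin.succ_injective c),
        Fin.succ_ne_zero]
    | succ t => rw [degreeOf_rename_of_injective (Fin.succ_injective c)]; exact hdeg t
  · rw [eval_rename, show i + (c + 1) = i + 1 + c by omega, hrec j (i + 1) (by omega)]
    congr 2
    funext t
    simp only [Function.comp_apply, Fin.val_succ]
    congr 1
    omega

theorem SatisfiesNLRecursion.mono {c'} (h : SatisfiesNLRecursion Z k n c) (hcc' : c ≤ c') :
    SatisfiesNLRecursion Z k n c' :=
  Nat.le_induction h (fun _ _ => SatisfiesNLRecursion.succ) c' hcc'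

theorem satisfiesNLRecursion_of_jointNLC_le {r : ℕ} (h : jointNLC Z k n ≤ r) :
    SatisfiesNLRecursion Z k n r := by
  classical
  unfold jointNLC at h
  split_ifs at h with hzero
  · exact ⟨0, fun _ => by simp, fun j i hi => by simp [hzero j _ hi]⟩
  · have hmin : SatisfiesNLRecursion Z k n (sInf {c | SatisfiesNLRecursion Z k n c}) :=
      Nat.sInf_mem (s := {c | SatisfiesNLRecursion Z k n c})
        ⟨n, satisfiesNLRecursion_of_le le_rfl⟩
    exact hmin.mono h

theorem jointNLC_congr (h : ∀ j, ∀ i < n, Z j i = Z' j i) :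
    jointNLC Z k n = jointNLC Z' k n := by
  classical
  have hrec : {c | SatisfiesNLRecursion Z k n c} = {c | SatisfiesNLRecursion Z' k n c} :=
    Set.ext fun _ => ⟨.congr h, .congr fun j i hi => (h j i hi).symm⟩
  have hzero : (∀ j, ∀ i < n, Z j i = 0) ↔ ∀ j, ∀ i < n, Z' j i = 0 :=
    forall_congr' fun j => forall₂_congr fun i hi => by rw [h j i hi]
  unfold jointNLC
  rw [hrec]
  exact if_congr hzero rfl rfl

def extendByZero (W : Fin n → Fin m → F) : Fin m → ℕ → F :=
  fun j i => if h : i < n then W ⟨i, h⟩ j else 0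

theorem setOf_jointNLC_le_eq_cylinder {b : ℝ} (hb : 0 ≤ b) :
    {Z : ℕ → Fin m → F | (jointNLC (fun j i => Z i j) k n : ℝ) ≤ b}
      = {Z | (fun i : Fin n => Z i) ∈ {W | jointNLC (extendByZero W) k n ≤ ⌊b⌋₊}} := by
  ext Z
  have hrestrict :
      jointNLC (fun j i => Z i j) k n = jointNLC (extendByZero fun i : Fin n => Z i) k n :=
    jointNLC_congr fun j i hi => by simp [extendByZero, hi]
  simp only [Set.mem_ofPred_eq, hrestrict, Nat.le_floor_iff hb]

end Recursion

section Counting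

variable (k : ℕ)

theorem card_setOf_jointNLC_le_of_le {n r : ℕ} (hrn : r ≤ n) :
    Nat.card {W : Fin n → Fin m → Fq | jointNLC (extendByZero W) k n ≤ r}
      ≤ Fintype.card Fq ^ ((k + 1) ^ r + m * r) := by
  set S := {W : Fin n → Fin m → Fq | jointNLC (extendByZero W) k n ≤ r}
  have hrec (W : S) : SatisfiesNLRecursion (extendByZero W.1) k n r :=
    satisfiesNLRecursion_of_jointNLC_le W.2
  choose p hdeg hp using hrec
  let code (W : S) : ((Fin r → Fin (k + 1)) → Fq) × (Fin r → Fin m → Fq) :=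
    (boxCoeffs k (p W), fun i => W.1 (Fin.castLE hrn i))
  have hcode : Function.Injective code := by
    intro W W' hWW'
    obtain ⟨hcoeff, hinit⟩ := Prod.ext_iff.mp hWW'
    have hpW : p W = p W' := injOn_boxCoeffs k (hdeg W) (hdeg W') hcoeff
    refine Subtype.ext (funext fun i => funext fun j => ?_)
    have hinit' : ∀ l < r, extendByZero W.1 j l = extendByZero W'.1 j l := fun l hl => by
      simp only [extendByZero, dif_pos (hl.trans_le hrn)]
      exact congrFun (congrFun hinit ⟨l, hl⟩) j
    simpa [extendByZero] using
      eq_of_recursion_of_eq_init (p W) (hp W j) (hpW ▸ hp W' j) hinit' i i.isLt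
  calc Nat.card S ≤ Nat.card (((Fin r → Fin (k + 1)) → Fq) × (Fin r → Fin m → Fq)) :=
        Nat.card_le_card_of_injective code hcode
    _ = Fintype.card Fq ^ ((k + 1) ^ r + m * r) := by
        simp only [Nat.card_eq_fintype_card, Fintype.card_prod, Fintype.card_fun,
          Fintype.card_fin]
        ring

theorem card_setOf_jointNLC_le (n r : ℕ) :
    Nat.card {W : Fin n → Fin m → Fq | jointNLC (extendByZero W) k n ≤ r}
      ≤ Fintype.card Fq ^ ((k + 1) ^ r + m * r) := by
  rcases le_or_gt r n with hrn | hnr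
  · exact card_setOf_jointNLC_le_of_le k hrn
  · calc _ ≤ Nat.card (Fin n → Fin m → Fq) := Finite.card_subtype_le _
      _ = Fintype.card Fq ^ (m * n) := by
        simp only [Nat.card_eq_fintype_card, Fintype.card_fun, Fintype.card_fin]
        ring
      _ ≤ Fintype.card Fq ^ ((k + 1) ^ r + m * r) :=
        Nat.pow_le_pow_right Fintype.card_pos
          ((Nat.mul_le_mul_left m hnr.le).trans (Nat.le_add_left _ _))

end Counting

theorem ENNReal.natCast_div_pow_le_rpow_sub {q c N : ℕ} (hq : 1 ≤ q) {x : ℝ}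
    (hc : c ≤ q ^ N) (hN : (N : ℝ) ≤ x) (d : ℕ) :
    (c : ENNReal) / (q : ENNReal) ^ d ≤ (q : ENNReal) ^ (x - d) := by
  have hq0 : (q : ENNReal) ≠ 0 := by exact_mod_cast (by omega : q ≠ 0)
  have hq1 : (1 : ENNReal) ≤ q := by exact_mod_cast hq
  rw [ENNReal.rpow_sub _ _ hq0 (ENNReal.natCast_ne_top q), ENNReal.rpow_natCast]
  gcongr
  calc (c : ENNReal) ≤ (q : ENNReal) ^ N := by exact_mod_cast hc
    _ = (q : ENNReal) ^ (N : ℝ) := (ENNReal.rpow_natCast _ N).symm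
    _ ≤ (q : ENNReal) ^ x := ENNReal.rpow_le_rpow_of_exponent_le hq1 hN

open Filter MeasureTheory in
theorem measure_of_low_complexity_set_le_general
    (k : ℕ)
    (B : ℕ → ℝ)
    (μ : Measure (ℕ → Fin m → Fq))
    (hμ : ∀ (n : ℕ) (S : Set (Fin n → Fin m → Fq)),
      μ {Z : ℕ → Fin m → Fq | (fun i : Fin n => Z i) ∈ S}
        = (Nat.card S : ENNReal) / (Fintype.card Fq : ENNReal) ^ (m * n)) :
    ∀ᶠ n in atTop,
      μ {Z : ℕ → Fin m → Fq | (jointNLC (fun j i => Z i j) k n : ℝ) ≤ B n}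
        ≤ (Fintype.card Fq : ENNReal) ^ (((k : ℝ) + 1) ^ (B n) + m * B n - m * n) := by
  refine Eventually.of_forall fun n => ?_
  rcases lt_or_ge (B n) 0 with hneg | hnonneg
  · have hempty :
        {Z : ℕ → Fin m → Fq | (jointNLC (fun j i => Z i j) k n : ℝ) ≤ B n} = ∅ :=
      Set.eq_empty_of_forall_notMem fun Z hZ => by
        linarith [Nat.cast_nonneg (α := ℝ) (jointNLC (fun j i => Z i j) k n), hZ.out]
    simp [hempty]
  set r := ⌊B n⌋₊
  have hr : (r : ℝ) ≤ B n := Nat.floor_le hnonneg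
  have hexponent : (((k + 1) ^ r + m * r : ℕ) : ℝ) ≤ ((k : ℝ) + 1) ^ (B n) + m * B n := by
    push_cast
    rw [← Real.rpow_natCast]
    gcongr
    linarith [(Nat.cast_nonneg k : (0 : ℝ) ≤ k)]
  rw [setOf_jointNLC_le_eq_cylinder hnonneg, hμ]
  exact ENNReal.natCast_div_pow_le_rpow_sub Fintype.card_pos
    (card_setOf_jointNLC_le k n r) hexponent (m * n) |>.trans_eq (by push_cast; rfl)

open Filter MeasureTheory in
/-- for the product of uniform measures `μ` on `(F_q^m)^∞` (characterized on
cylinder sets), the set `A_n = {Z | N_k^(m)(Z,n) ≤ B_n}` with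
`B_n = log(mn)/log(k+1) - ε` satisfies `μ(A_n) ≤ q^{(k+1)^{B_n} + m·B_n - m·n}`
for all sufficiently large `n`. -/
theorem measure_of_low_complexity_set_le
    (k : ℕ) (hk1 : 1 ≤ k) (hkq : k ≤ Fintype.card Fq - 1) (hm : 1 ≤ m)
    (ε : ℝ) (hε : 0 < ε)
    (B : ℕ → ℝ) (hB : ∀ n : ℕ, B n = Real.log (m * n) / Real.log (k + 1) - ε)
    (μ : Measure (ℕ → Fin m → Fq)) [IsProbabilityMeasure μ]
    (hμ : ∀ (n : ℕ) (S : Set (Fin n → Fin m → Fq)),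
      μ {Z : ℕ → Fin m → Fq | (fun i : Fin n => Z i) ∈ S}
        = (Nat.card S : ENNReal) / (Fintype.card Fq : ENNReal) ^ (m * n)) :
    ∀ᶠ n in atTop,
      μ {Z : ℕ → Fin m → Fq | (jointNLC (fun j i => Z i j) k n : ℝ) ≤ B n}
        ≤ (Fintype.card Fq : ENNReal) ^ (((k : ℝ) + 1) ^ (B n) + m * B n - m * n) :=
  measure_of_low_complexity_set_le_general k B μ hμ
end

section
/- Let γ ∈ F_q^* have order t, and for ξ ∈ F_q^* define ||ξ||_t = b if ξ = γ^b with 0 ≤ b < t, and ||ξ||_t = t if ξ ∉ ⟨γ⟩. Let α_1, ..., α_m ∈ F_q^* be pairwise distinct, and let δ_t = min over j1 ≠ j2 of ||α_{j1} α_{j2}^{-1}||_t. If 0 ≤ n - c ≤ δ_t, then the m(n-c) elements α_j γ^i for 0 ≤ i ≤ n-c-1 and 1 ≤ j ≤ m are pairwise distinct. -/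
/-!
If `α_{j1} γ^i = α_{j2} γ^{i+d}` with `j1 ≠ j2`, then `α_{j1} α_{j2}⁻¹ = γ^d`, so `δ_t ≤ d`;
for `i, i + d < n - c ≤ δ_t` this is impossible. For `j1 = j2` the equation reduces to
`γ^{i1} = γ^{i2}`, and `i1, i2 < n - c ≤ δ_t ≤ t = ord γ` forces `i1 = i2`.
-/

open scoped Classical in
/-- `‖ξ‖_t = b` if `ξ = γ^b` with `0 ≤ b < t`, and `‖ξ‖_t = t` if `ξ ∉ ⟨γ⟩`. -/
noncomputable def normT {Fq : Type*} [Field Fq] (γ : Fq) (t : ℕ) (ξ : Fq) : ℕ :=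
  if ∃ b : ℕ, b < t ∧ ξ = γ ^ b then sInf {b : ℕ | ξ = γ ^ b} else t

/-- `δ_t`: the minimum of `‖α_{j1} α_{j2}⁻¹‖_t` over `j1 ≠ j2`. -/
noncomputable def deltaT {Fq : Type*} [Field Fq] {m : ℕ}
    (γ : Fq) (t : ℕ) (α : Fin m → Fq) : ℕ :=
  sInf {d : ℕ | ∃ j1 j2 : Fin m, j1 ≠ j2 ∧ d = normT γ t (α j1 * (α j2)⁻¹)}

section

variable {F : Type*} [Field F] {m : ℕ} (γ : F) (t : ℕ) (α : Fin m → F)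

theorem normT_le (ξ : F) : normT γ t ξ ≤ t := by
  classical
  unfold normT
  split_ifs with h
  · obtain ⟨b, hbt, hξ⟩ := h
    exact (Nat.sInf_le hξ).trans hbt.le
  · exact le_rfl

theorem normT_pow_le {d : ℕ} (hd : d < t) : normT γ t (γ ^ d) ≤ d := by
  classical
  rw [normT, if_pos ⟨d, hd, rfl⟩]
  exact Nat.sInf_le rfl

theorem deltaT_le_normT {j1 j2 : Fin m} (h : j1 ≠ j2) :
    deltaT γ t α ≤ normT γ t (α j1 * (α j2)⁻¹) :=
  Nat.sInf_le ⟨j1, j2, h, rfl⟩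

theorem deltaT_le : deltaT γ t α ≤ t := by
  rcases Set.eq_empty_or_nonempty
      {d : ℕ | ∃ j1 j2 : Fin m, j1 ≠ j2 ∧ d = normT γ t (α j1 * (α j2)⁻¹)}
    with hempty | ⟨_, j1, j2, hne, _⟩
  · rw [deltaT, hempty, Nat.sInf_empty]
    exact Nat.zero_le t
  · exact (deltaT_le_normT γ t α hne).trans (normT_le γ t _)

variable {γ t α}

theorem deltaT_le_of_mul_pow_eq (hγ0 : γ ≠ 0) {j1 j2 : Fin m} (hα0 : α j2 ≠ 0) (hj : j1 ≠ j2)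
    {i d : ℕ} (hd : d < t) (h : α j1 * γ ^ i = α j2 * γ ^ (i + d)) :
    deltaT γ t α ≤ d := by
  have hquot : α j1 * (α j2)⁻¹ = γ ^ d := by
    rw [mul_inv_eq_iff_eq_mul₀ hα0]
    refine mul_right_cancel₀ (pow_ne_zero i hγ0) ?_
    rw [h, pow_add]
    ring
  calc deltaT γ t α ≤ normT γ t (α j1 * (α j2)⁻¹) := deltaT_le_normT γ t α hj
    _ = normT γ t (γ ^ d) := by rw [hquot]
    _ ≤ d := normT_pow_le γ t hd

theorem eq_of_mul_pow_eq_of_le (hγ0 : γ ≠ 0) (hα0 : ∀ j, α j ≠ 0) {i1 i2 : ℕ} (hle : i1 ≤ i2)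
    (hi2 : i2 < deltaT γ t α) {j1 j2 : Fin m} (h : α j1 * γ ^ i1 = α j2 * γ ^ i2) : j1 = j2 := by
  by_contra hj
  obtain ⟨d, rfl⟩ := Nat.exists_eq_add_of_le hle
  have hdt : d < t := by have hδt := deltaT_le γ t α; omega
  have hδd := deltaT_le_of_mul_pow_eq hγ0 (hα0 j2) hj hdt h
  omega

end

theorem inversive_elements_pairwise_distinct_general
    {Fq : Type*} [Field Fq] {m : ℕ}
    (γ : Fq) (t : ℕ) (hγt : orderOf γ = t) (hγ0 : γ ≠ 0)
    (α : Fin m → Fq) (hα0 : ∀ j, α j ≠ 0)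
    (n c : ℕ) (hδ : n - c ≤ deltaT γ t α) :
    ∀ i1 i2 : ℕ, i1 < n - c → i2 < n - c → ∀ j1 j2 : Fin m,
      α j1 * γ ^ i1 = α j2 * γ ^ i2 → i1 = i2 ∧ j1 = j2 := by
  intro i1 i2 hi1 hi2 j1 j2 h
  have hδt := deltaT_le γ t α
  obtain rfl : j1 = j2 := by
    rcases le_total i1 i2 with hle | hle
    · exact eq_of_mul_pow_eq_of_le (t := t) hγ0 hα0 hle (by omega) h
    · exact (eq_of_mul_pow_eq_of_le (t := t) hγ0 hα0 hle (by omega) h.symm).symm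
  refine ⟨pow_injOn_Iio_orderOf ?_ ?_ (mul_left_cancel₀ (hα0 j1) h), rfl⟩ <;>
    simp only [Set.mem_Iio, hγt] <;> omega

/-- if `0 ≤ n - c ≤ δ_t`, then the `m(n-c)` elements `α_j γ^i`,
`0 ≤ i ≤ n-c-1`, `1 ≤ j ≤ m`, are pairwise distinct. -/
theorem inversive_elements_pairwise_distinct
    {Fq : Type*} [Field Fq] [Fintype Fq] {m : ℕ}
    (γ : Fq) (t : ℕ) (hγt : orderOf γ = t) (hγ0 : γ ≠ 0)
    (α : Fin m → Fq) (hα0 : ∀ j, α j ≠ 0) (hαinj : Function.Injective α)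
    (n c : ℕ) (hcn : c ≤ n) (hδ : n - c ≤ deltaT γ t α) :
    ∀ i1 i2 : ℕ, i1 < n - c → i2 < n - c → ∀ j1 j2 : Fin m,
      α j1 * γ ^ i1 = α j2 * γ ^ i2 → i1 = i2 ∧ j1 = j2 :=
  inversive_elements_pairwise_distinct_general γ t hγt hγ0 α hα0 n c hδ
end
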